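/- The map A ↦ d_A is a reverse lattice embedding of the Medvedev lattice into the strong Weihrauch lattice: for all A, B ⊆ 2^ω, d_B ≤_sW d_A if and only if A is Medvedev reducible to B; moreover d_{A ⊔ B} ≡_sW d_A ⊞ d_B (so Medvedev meets go to strong Weihrauch joins) and d_{A × B} ≡_sW d_A ⊓ d_B (so Medvedev joins go to strong Weihrauch meets). -/

import Mathlib

attribute [local instance] Classical.propDecidable

namespace StrongWeihrauch

noncomputable section

/-! ### Cantor space, monotone approximations, and the evaluation map -/

/-- Cantor space `2^ω`; we identify subsets of `ω` with their characteristic functions. -/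
abbrev Cantor : Type := ℕ → Bool

/-- The coded triple `⟨n,s,i⟩`. -/
def tpl (n s i : ℕ) : ℕ := Nat.pair n (Nat.pair s i)

/-- A monotone approximation (Definition 3.1): every element has the form `⟨n,s,i⟩` with
`i < 2`; for each `n` there is at most one pair `(s,i)` with `⟨n,s,i⟩ ∈ a`; and the stages `s`
are strictly increasing in `n`. -/
def MonotoneApprox (a : Cantor) : Prop :=
  (∀ k, a k = true → ∃ n s i, i < 2 ∧ k = tpl n s i) ∧
  (∀ n s t i j, a (tpl n s i) = true → a (tpl n t j) = true → s = t ∧ i = j) ∧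
  (∀ m n s t i j, a (tpl m s i) = true → a (tpl n t j) = true → m < n → s < t)

/-- A total monotone approximation: every `n` gets a value. -/
def TotalMonotoneApprox (a : Cantor) : Prop :=
  MonotoneApprox a ∧ ∀ n, ∃ s i, i < 2 ∧ a (tpl n s i) = true

/-- The value of the evaluation map `e` on a (total) monotone approximation:
`eVal a n = i` iff `⟨n,s,i⟩ ∈ a` for some `s`. -/
def eVal (a : Cantor) : Cantor := fun n => decide (∃ s, a (tpl n s 1) = true)

/-- The evaluation map `e : ⊆ 2^ω → 2^ω`, the partial function whose domain is the set of
total monotone approximations `a`, with `e(a)(n) = i` iff `⟨n,s,i⟩ ∈ a` for some `s`. -/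
def evalMA : Cantor →. Cantor := fun a => ⟨TotalMonotoneApprox a, fun _ => eVal a⟩

/-! ### Turing functionals -/

/-- The oracle information available at stage `s`: the first `s` bits of `p`. -/
def initSeg (p : Cantor) (s : ℕ) : List Bool := (List.range s).map p

/-- A `{0,1}`-valued Turing functional on Cantor space, presented by a computable monotone
finite-prefix approximation: `approx σ n = some b` means that the computation on input `n`
with oracle prefix `σ` has converged, with output `b`. -/
structure TuringFunctional where
  approx : List Bool → ℕ → Option Bool
  computable : Computable₂ approx
  mono : ∀ σ τ n b, σ <+: τ → approx σ n = some b → approx τ n = some b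

namespace TuringFunctional

/-- `Φ^p(n)[s]↓`. -/
def ConvAt (Φ : TuringFunctional) (p : Cantor) (n s : ℕ) : Prop :=
  (Φ.approx (initSeg p s) n).isSome = true

/-- `s` is least such that `Φ^p(n)[s]↓`. -/
def LeastStage (Φ : TuringFunctional) (p : Cantor) (n s : ℕ) : Prop :=
  Φ.ConvAt p n s ∧ ∀ t, t < s → ¬ Φ.ConvAt p n t

/-- Convention 2.1: if `Φ^p(n)[s]↓` then `Φ^p(m)[s]↓` for all `m < n`, and for each `s`
there is at most one `n` for which `s` is least with `Φ^p(n)[s]↓`. -/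
def Convention (Φ : TuringFunctional) : Prop :=
  (∀ (p : Cantor) (s n m : ℕ), m < n → Φ.ConvAt p n s → Φ.ConvAt p m s) ∧
  (∀ (p : Cantor) (s n n' : ℕ), Φ.LeastStage p n s → Φ.LeastStage p n' s → n = n')

/-- The partial function `⊆ 2^ω → 2^ω` computed by `Φ`; it is defined at `p` exactly when
`Φ(p)` is total, in which case its value is the map `n ↦ Φ^p(n)`. -/
def eval (Φ : TuringFunctional) : Cantor →. Cantor :=
  fun p => ⟨∀ n, ∃ s b, Φ.approx (initSeg p s) n = some b,
    fun h n => (h n).choose_spec.choose⟩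

end TuringFunctional

/-- `a_{Φ(p)}`: the set of all `⟨n,s,i⟩` where `s` is least such that `Φ^p(n)[s]↓ = i`. -/
def approxSeq (Φ : TuringFunctional) (p : Cantor) : Cantor := fun k =>
  decide (∃ n s b, k = tpl n s (Bool.toNat b) ∧ Φ.LeastStage p n s ∧
    Φ.approx (initSeg p s) n = some b)

/-- Turing reducibility `q ≤_T p` on Cantor space. -/
def TuringLe (q p : Cantor) : Prop := ∃ Φ : TuringFunctional, Φ.eval p = Part.some q

/-! ### Pairing on Cantor space -/

/-- The effective join `⟨p,q⟩` on Cantor space. -/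
def pairC (p q : Cantor) : Cantor := fun n => if n % 2 = 0 then p (n / 2) else q (n / 2)

def leftC (r : Cantor) : Cantor := fun n => r (2 * n)

def rightC (r : Cantor) : Cantor := fun n => r (2 * n + 1)

/-- The singleton `{i} ⊆ ω` as an element of Cantor space. -/
def natSet (i : ℕ) : Cantor := fun n => decide (n = i)

/-- `⟨i,p⟩`, i.e. `⟨{i},p⟩`. -/
def inC (i : ℕ) (p : Cantor) : Cantor := pairC (natSet i) p

lemma leftC_pairC (p q : Cantor) : leftC (pairC p q) = p := by
  funext n
  have h1 : 2 * n % 2 = 0 := by omega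
  have h2 : 2 * n / 2 = n := by omega
  simp [leftC, pairC, h1, h2]

lemma rightC_pairC (p q : Cantor) : rightC (pairC p q) = q := by
  funext n
  have h1 : (2 * n + 1) % 2 = 1 := by omega
  have h2 : (2 * n + 1) / 2 = n := by omega
  simp [rightC, pairC, h1, h2]

lemma tpl_inj {n s i n' s' i' : ℕ} (h : tpl n s i = tpl n' s' i') :
    n = n' ∧ s = s' ∧ i = i' := by
  unfold tpl at h
  rw [Nat.pair_eq_pair] at h
  rcases h with ⟨h1, h2⟩
  rw [Nat.pair_eq_pair] at h2
  exact ⟨h1, h2.1, h2.2⟩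

lemma toNat_lt_two (b : Bool) : b.toNat < 2 := by cases b <;> decide

/-- Encoding of `q ∈ 2^ω` as a total monotone approximation evaluating to `q`. -/
def maEncode (q : Cantor) : Cantor := fun k => decide (∃ n, k = tpl n n (q n).toNat)

lemma maEncode_mem {q : Cantor} {k : ℕ} :
    maEncode q k = true ↔ ∃ n, k = tpl n n (q n).toNat := by
  simp [maEncode]

lemma maEncode_total (q : Cantor) : TotalMonotoneApprox (maEncode q) := by
  refine ⟨⟨?_, ?_, ?_⟩, ?_⟩
  · intro k hk
    obtain ⟨n, rfl⟩ := maEncode_mem.mp hk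
    exact ⟨n, n, (q n).toNat, toNat_lt_two _, rfl⟩
  · intro n s t i j h1 h2
    obtain ⟨m, hm⟩ := maEncode_mem.mp h1
    obtain ⟨m', hm'⟩ := maEncode_mem.mp h2
    obtain ⟨e1, e2, e3⟩ := tpl_inj hm
    obtain ⟨f1, f2, f3⟩ := tpl_inj hm'
    have hmm' : m = m' := by omega
    refine ⟨by omega, by rw [e3, f3, hmm']⟩
  · intro m n s t i j h1 h2 hmn
    obtain ⟨u, hu⟩ := maEncode_mem.mp h1
    obtain ⟨v, hv⟩ := maEncode_mem.mp h2
    obtain ⟨e1, e2, _⟩ := tpl_inj hu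
    obtain ⟨f1, f2, _⟩ := tpl_inj hv
    omega
  · intro n
    exact ⟨n, (q n).toNat, toNat_lt_two _, maEncode_mem.mpr ⟨n, rfl⟩⟩

lemma eVal_maEncode (q : Cantor) : eVal (maEncode q) = q := by
  funext n
  have hiff : (∃ s, maEncode q (tpl n s 1) = true) ↔ q n = true := by
    constructor
    · rintro ⟨s, hs⟩
      obtain ⟨m, hm⟩ := maEncode_mem.mp hs
      obtain ⟨e1, e2, e3⟩ := tpl_inj hm
      subst e1
      cases hq : q n
      · rw [hq] at e3; simp at e3
      · rfl
    · intro hq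
      refine ⟨n, maEncode_mem.mpr ⟨n, ?_⟩⟩
      rw [hq]
      rfl
  cases hq : q n
  · have hne : ¬ (∃ s, maEncode q (tpl n s 1) = true) := by
      intro h
      have ht := hiff.mp h
      rw [ht] at hq
      exact Bool.noConfusion hq
    simp [eVal, hne]
  · simp [eVal, hiff.mpr hq]

/-- An explicit non-(monotone approximation). -/
def badMA : Cantor := fun k => decide (k = tpl 0 0 0 ∨ k = tpl 0 1 0)

lemma badMA_not : ¬ TotalMonotoneApprox badMA := by
  rintro ⟨⟨-, h2, -⟩, -⟩
  have ha : badMA (tpl 0 0 0) = true := by simp [badMA]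
  have hb : badMA (tpl 0 1 0) = true := by simp [badMA]
  have := (h2 0 0 1 0 0 ha hb).1
  omega

/-! ### Represented spaces -/

/-- A represented space: a set `X` together with a partial surjection `δ : ⊆ 2^ω → X`. -/
structure RepSp : Type 1 where
  X : Type
  δ : Cantor →. X
  surj : ∀ x : X, ∃ p, x ∈ δ p

namespace RepSp

/-- The product representation of `X₀ × X₁`: `δ(⟨p₀,p₁⟩) = (δ₀(p₀), δ₁(p₁))`. -/
def prod (A B : RepSp) : RepSp where
  X := A.X × B.X
  δ := fun r => (A.δ (leftC r)).bind fun x => (B.δ (rightC r)).map fun y => (x, y)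
  surj := by
    rintro ⟨x, y⟩
    obtain ⟨p, hp⟩ := A.surj x
    obtain ⟨q, hq⟩ := B.surj y
    refine ⟨pairC p q, ?_⟩
    simp only [leftC_pairC, rightC_pairC, Part.mem_bind_iff]
    exact ⟨x, hp, Part.mem_map _ hq⟩

/-- The disjoint-union representation of `X₀ ⊔ X₁`: `δ(⟨i,p⟩) = ⟨i, δᵢ(p)⟩`. -/
def sum (A B : RepSp) : RepSp where
  X := A.X ⊕ B.X
  δ := fun r =>
    if leftC r = natSet 0 then (A.δ (rightC r)).map Sum.inl
    else if leftC r = natSet 1 then (B.δ (rightC r)).map Sum.inr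
    else Part.none
  surj := by
    rintro (x | y)
    · obtain ⟨p, hp⟩ := A.surj x
      refine ⟨inC 0 p, ?_⟩
      have e1 : leftC (inC 0 p) = natSet 0 := leftC_pairC _ _
      have e2 : rightC (inC 0 p) = p := rightC_pairC _ _
      simp only [e1, e2, if_pos rfl]
      exact Part.mem_map _ hp
    · obtain ⟨p, hp⟩ := B.surj y
      refine ⟨inC 1 p, ?_⟩
      have e1 : leftC (inC 1 p) = natSet 1 := leftC_pairC _ _
      have e2 : rightC (inC 1 p) = p := rightC_pairC _ _
      have hne : natSet 1 ≠ natSet 0 := by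
        intro h
        have := congrFun h 0
        simp [natSet] at this
      simp only [e1, e2, hne, if_neg, if_pos rfl, ite_false, ite_true]
      exact Part.mem_map _ hp

/-- The completion `Ŷ = Y ∪ {∞_Y}` (with `∞_Y` rendered as `none`), represented by
`δ_Ŷ(p) = δ_Y(e(p))` if `p` is a total monotone approximation with `e(p) ∈ dom(δ_Y)`, and
`δ_Ŷ(p) = ∞_Y` otherwise. -/
def hat (A : RepSp) : RepSp where
  X := Option A.X
  δ := fun p => Part.some (((evalMA p).bind A.δ).toOption)
  surj := by
    intro y
    match y with
    | none =>
        refine ⟨badMA, ?_⟩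
        rw [Part.mem_some_iff]
        have hd : ¬ ((evalMA badMA).bind A.δ).Dom := by
          rintro ⟨h1, -⟩
          exact badMA_not h1
        rw [eq_comm, Part.toOption_eq_none_iff]
        exact hd
    | some x =>
        obtain ⟨p, hp⟩ := A.surj x
        refine ⟨maEncode p, ?_⟩
        rw [Part.mem_some_iff, eq_comm, Part.toOption_eq_some_iff]
        refine Part.mem_bind_iff.mpr ?_
        refine ⟨p, ?_, hp⟩
        exact ⟨maEncode_total p, eVal_maEncode p⟩

end RepSp

/-! ### Partial multifunctions and the Weihrauch reducibilities -/

/-- A partial multifunction `f : ⊆ X ⇉ Y` between represented spaces: `f.f x` is the set of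
solutions of the instance `x`, and the domain of `f` is the set of `x` with `f.f x ≠ ∅`. -/
structure MFn : Type 1 where
  A : RepSp
  B : RepSp
  f : A.X → Set B.X

namespace MFn

/-- The coproduct `f ⊔ g`. -/
def sqcup (f g : MFn) : MFn where
  A := f.A.sum g.A
  B := f.B.sum g.B
  f := Sum.elim (fun x => Sum.inl '' f.f x) (fun y => Sum.inr '' g.f y)

/-- The meet `f ⊓ g`, with `(f ⊓ g)(⟨x,y⟩) = ({0} × f(x)) ∪ ({1} × g(y))` for
`x ∈ dom f`, `y ∈ dom g`. -/
def sqcap (f g : MFn) : MFn where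
  A := f.A.prod g.A
  B := f.B.sum g.B
  f := fun xy =>
    if (f.f xy.1).Nonempty ∧ (g.f xy.2).Nonempty then
      (Sum.inl '' f.f xy.1) ∪ (Sum.inr '' g.f xy.2)
    else ∅

/-- The join `f ⊞ g : ⊆ X₀ ⊔ X₁ ⇉ Ŷ₀ × Ŷ₁`, with `(f ⊞ g)(⟨0,x⟩) = f(x) × Ŷ₁` and
`(f ⊞ g)(⟨1,x⟩) = Ŷ₀ × g(x)`. -/
def boxplus (f g : MFn) : MFn where
  A := f.A.sum g.A
  B := (f.B.hat).prod (g.B.hat)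
  f := Sum.elim
    (fun x => (Option.some '' f.f x) ×ˢ (Set.univ : Set (Option g.B.X)))
    (fun y => (Set.univ : Set (Option f.B.X)) ×ˢ (Option.some '' g.f y))

end MFn

/-- `F ⊢ f`: the partial function `F : ⊆ 2^ω → 2^ω` is a realizer of `f`, i.e.
`δ_Y F(p) ∈ f δ_X(p)` for every `p ∈ dom(f δ_X)`. -/
def Realizes (F : Cantor →. Cantor) (f : MFn) : Prop :=
  ∀ p x, x ∈ f.A.δ p → (f.f x).Nonempty →
    ∃ q ∈ F p, ∃ y ∈ f.B.δ q, y ∈ f.f x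

/-- Composition of partial functions on Cantor space: `pcomp F G = F ∘ G`. -/
def pcomp (F G : Cantor →. Cantor) : Cantor →. Cantor := fun p => (G p).bind F

/-- Strong Weihrauch reducibility: `f ≤_sW g` iff there are Turing functionals `Φ, Ψ` with
`Ψ G Φ ⊢ f` for every `G ⊢ g`. -/
def sWLe (f g : MFn) : Prop :=
  ∃ Φ Ψ : TuringFunctional, ∀ G : Cantor →. Cantor, Realizes G g →
    Realizes (pcomp Ψ.eval (pcomp G Φ.eval)) f

/-- Strong Weihrauch equivalence. -/
def sWEq (f g : MFn) : Prop := sWLe f g ∧ sWLe g f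

/-- Weihrauch reducibility: `f ≤_W g` iff there are Turing functionals `Φ, Ψ` with
`Ψ⟨id, G Φ⟩ ⊢ f` for every `G ⊢ g`. -/
def wLe (f g : MFn) : Prop :=
  ∃ Φ Ψ : TuringFunctional, ∀ G : Cantor →. Cantor, Realizes G g →
    Realizes (fun p => (pcomp G Φ.eval p).bind fun q => Ψ.eval (pairC p q)) f

/-- Weihrauch equivalence. -/
def wEq (f g : MFn) : Prop := wLe f g ∧ wLe g f

/-- Cantor space as a represented space, with the identity representation. -/
def CantorSp : RepSp where
  X := Cantor
  δ := fun p => Part.some p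
  surj := fun p => ⟨p, Part.mem_some_iff.mpr rfl⟩

/-- A partial multifunction on Cantor space, viewed as a multifunction on represented
spaces via the identity representation. -/
def ofCantor (F : Cantor → Set Cantor) : MFn := ⟨CantorSp, CantorSp, F⟩

/-! ### Further definitions used in the statements -/

/-- `c` is an index for the Turing functional `Ψ`. -/
def codesTF (c : Nat.Partrec.Code) (Ψ : TuringFunctional) : Prop :=
  ∀ (σ : List Bool) (n : ℕ),
    c.eval (Nat.pair (Encodable.encode σ) n) = Part.some (Encodable.encode (Ψ.approx σ n))

/-- The multifunction `h` of Lemma 4.4: `h(⟨0,p⟩)` consists of all pairs `⟨a,q⟩` where `a`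
is a total monotone approximation with `e(a) ∈ F(p)`, and `h(⟨1,p⟩)` of all pairs `⟨q,a⟩`
where `a` is a total monotone approximation with `e(a) ∈ G(p)`. -/
def hJoin (F G : Cantor → Set Cantor) : Cantor → Set Cantor := fun r =>
  {z | leftC r = natSet 0 ∧
    ∃ a q, z = pairC a q ∧ TotalMonotoneApprox a ∧ eVal a ∈ F (rightC r)} ∪
  {z | leftC r = natSet 1 ∧
    ∃ q a, z = pairC q a ∧ TotalMonotoneApprox a ∧ eVal a ∈ G (rightC r)}

/-- A single-valued partial function on Cantor space, viewed as a partial multifunction on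
represented spaces (via the identity representation). -/
def pfnToM (F : Cantor →. Cantor) : MFn := ofCantor fun p => {q | q ∈ F p}

/-- The single-point partial function `{p} → {q}`. -/
def singleFn (p q : Cantor) : MFn := ofCantor fun r => if r = p then {q} else ∅

/-- `A` is Medvedev reducible to `B`. -/
def MedvedevLe (A B : Set Cantor) : Prop :=
  ∃ Φ : TuringFunctional, ∀ p ∈ B, ∃ q ∈ Φ.eval p, q ∈ A

/-- The all-zero sequence `0^ω`. -/
def zeroSeq : Cantor := fun _ => false

/-- `d_A : A → {0^ω}`. -/
def dFn (A : Set Cantor) : MFn := ofCantor fun p => if p ∈ A then {zeroSeq} else ∅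

/-- `A ⊔ B ⊆ 2^ω`: all `⟨i,p⟩` with `i < 2` and `p ∈ A` if `i = 0`, `p ∈ B` if `i = 1`. -/
def setSum (A B : Set Cantor) : Set Cantor :=
  {r | ∃ p ∈ A, r = inC 0 p} ∪ {r | ∃ p ∈ B, r = inC 1 p}

/-- `A × B ⊆ 2^ω`: all pairs `⟨p,q⟩` with `p ∈ A` and `q ∈ B`. -/
def setProd (A B : Set Cantor) : Set Cantor := {r | ∃ p ∈ A, ∃ q ∈ B, r = pairC p q}

/-- `p` is a name of an instance of `f`. -/
def domName (f : MFn) (p : Cantor) : Prop := ∃ x ∈ f.A.δ p, (f.f x).Nonempty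

/-- `q` is a name of a solution to the instance of `f` named by `p`. -/
def solName (f : MFn) (p q : Cantor) : Prop :=
  ∃ x ∈ f.A.δ p, ∃ y ∈ f.B.δ q, y ∈ f.f x

/-- Strong computable reducibility `f ≤_sc g`: every name `p` of an instance of `f`
computes a name `p'` of an instance of `g` such that every name of a solution to the
latter computes a name of a solution to the former. -/
def scLe (f g : MFn) : Prop :=
  ∀ p, domName f p → ∃ p', TuringLe p' p ∧ domName g p' ∧
    ∀ q, solName g p' q → ∃ z, TuringLe z q ∧ solName f p z

/-- Strong computable equivalence. -/
def scEq (f g : MFn) : Prop := scLe f g ∧ scLe g f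

/-! Since `0^ω` is computable and is the only solution of `d_S`, a strong Weihrauch reduction
to or from `d_S` can always use a constant backward functional, and is then determined by its
forward functional. Feeding a reduction `d_S ≤_sW g` the realizer of `g` that is defined exactly
on the names of instances of `g` shows that `d_S ≤_sW g` holds iff some Turing functional maps `S`
into these names; for `g = d_A` this is Medvedev reducibility of `A` to `S`. The names of
instances of `d_A ⊞ d_B` and of `d_A ⊓ d_B` are exactly the elements of `A ⊔ B` and of `A × B`,
and each of these multifunctions has a computable name of a common solution of all its
instances, so the identity functional gives both equivalences. -/

lemma pairC_leftC_rightC (r : Cantor) : pairC (leftC r) (rightC r) = r := by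
  funext n
  by_cases h : n % 2 = 0
  · have h2 : 2 * (n / 2) = n := by omega
    simp [pairC, leftC, h, h2]
  · have h2 : 2 * (n / 2) + 1 = n := by omega
    simp [pairC, rightC, h, h2]

lemma natSet_zero_ne_one : natSet 0 ≠ natSet 1 := by
  intro h
  simpa [natSet] using congrFun h 1

lemma mem_setSum {A B : Set Cantor} {r : Cantor} :
    r ∈ setSum A B ↔
      (leftC r = natSet 0 ∧ rightC r ∈ A) ∨ (leftC r = natSet 1 ∧ rightC r ∈ B) := by
  constructor
  · rintro (⟨p, hp, rfl⟩ | ⟨p, hp, rfl⟩)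
    · exact Or.inl ⟨leftC_pairC _ _, by rwa [inC, rightC_pairC]⟩
    · exact Or.inr ⟨leftC_pairC _ _, by rwa [inC, rightC_pairC]⟩
  · rintro (⟨h, hA⟩ | ⟨h, hB⟩)
    · exact Or.inl ⟨rightC r, hA, by rw [inC, ← h, pairC_leftC_rightC]⟩
    · exact Or.inr ⟨rightC r, hB, by rw [inC, ← h, pairC_leftC_rightC]⟩

lemma mem_setProd {A B : Set Cantor} {r : Cantor} :
    r ∈ setProd A B ↔ leftC r ∈ A ∧ rightC r ∈ B := by
  constructor
  · rintro ⟨p, hp, q, hq, rfl⟩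
    rw [leftC_pairC, rightC_pairC]
    exact ⟨hp, hq⟩
  · rintro ⟨hA, hB⟩
    exact ⟨_, hA, _, hB, (pairC_leftC_rightC r).symm⟩

lemma computable_pairC {p q : Cantor} (hp : Computable p) (hq : Computable q) :
    Computable (pairC p q) := by
  have hhalf : Computable fun n : ℕ => n / 2 :=
    (Primrec.nat_div.comp Primrec.id (Primrec.const 2)).to_comp
  have heven : Computable fun n : ℕ => n % 2 == 0 :=
    (Primrec.beq.comp (Primrec.nat_mod.comp Primrec.id (Primrec.const 2))
      (Primrec.const 0)).to_comp
  refine (Computable.cond heven (hp.comp hhalf) (hq.comp hhalf)).of_eq fun n => ?_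
  rcases Nat.mod_two_eq_zero_or_one n with h | h <;> simp [pairC, h]

lemma computable_natSet (i : ℕ) : Computable (natSet i) :=
  (Primrec.beq.comp Primrec.id (Primrec.const i)).to_comp.of_eq fun n =>
    Bool.eq_iff_iff.2 (by simp [natSet])

lemma unpair_fst_tpl (n s i : ℕ) : (tpl n s i).unpair.1 = n := by
  simp [tpl]

lemma computable_maEncode {q : Cantor} (hq : Computable q) : Computable (maEncode q) := by
  have hfst : Computable fun k : ℕ => k.unpair.1 := Computable.fst.comp Computable.unpair
  have htoNat : Computable fun k : ℕ => (q k.unpair.1).toNat :=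
    (Computable.cond (hq.comp hfst) (Computable.const 1) (Computable.const 0)).of_eq fun k => by
      cases q k.unpair.1 <;> rfl
  have htpl : Computable fun k : ℕ => tpl k.unpair.1 k.unpair.1 (q k.unpair.1).toNat :=
    Primrec₂.natPair.to_comp.comp hfst (Primrec₂.natPair.to_comp.comp hfst htoNat)
  -- `k` belongs to `maEncode q` iff it is the triple determined by its first coordinate.
  refine (Primrec.beq.to_comp.comp Computable.id htpl).of_eq fun k => Bool.eq_iff_iff.2 ?_
  simp only [beq_iff_eq, maEncode, decide_eq_true_iff]
  constructor
  · exact fun h => ⟨_, h⟩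
  · rintro ⟨n, rfl⟩
    rw [unpair_fst_tpl]
    rfl

lemma mem_CantorSp_δ {p x : Cantor} : x ∈ CantorSp.δ p ↔ x = p := Part.mem_some_iff

namespace RepSp

variable {X Y : RepSp}

lemma mem_prod_δ {r : Cantor} {xy : (X.prod Y).X} :
    xy ∈ (X.prod Y).δ r ↔ xy.1 ∈ X.δ (leftC r) ∧ xy.2 ∈ Y.δ (rightC r) := by
  obtain ⟨x, y⟩ := xy
  -- The carrier `(X.prod Y).X` only unfolds to `X.X × Y.X` at default transparency, so the
  -- `Part` lemmas apply after restating the membership at the unfolded type.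
  change ((x, y) : X.X × Y.X) ∈ ((X.δ (leftC r)).bind fun x => (Y.δ (rightC r)).map
    fun y => (x, y) : Part (X.X × Y.X)) ↔ _
  simp [Part.mem_bind_iff, Part.mem_map_iff]

lemma inl_mem_sum_δ {r : Cantor} {x : X.X} :
    (Sum.inl x : (X.sum Y).X) ∈ (X.sum Y).δ r ↔ leftC r = natSet 0 ∧ x ∈ X.δ (rightC r) := by
  change Sum.inl x ∈ (_ : Part (X.X ⊕ Y.X)) ↔ _
  dsimp only [RepSp.sum]
  by_cases h0 : leftC r = natSet 0
  · simp [h0, Part.mem_map_iff]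
  · by_cases h1 : leftC r = natSet 1 <;>
      simp [h0, h1, Part.mem_map_iff, natSet_zero_ne_one.symm, Part.notMem_none]

lemma inr_mem_sum_δ {r : Cantor} {y : Y.X} :
    (Sum.inr y : (X.sum Y).X) ∈ (X.sum Y).δ r ↔ leftC r = natSet 1 ∧ y ∈ Y.δ (rightC r) := by
  change Sum.inr y ∈ (_ : Part (X.X ⊕ Y.X)) ↔ _
  dsimp only [RepSp.sum]
  by_cases h0 : leftC r = natSet 0
  · simp [h0, Part.mem_map_iff, natSet_zero_ne_one]
  · by_cases h1 : leftC r = natSet 1 <;>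
      simp [h0, h1, Part.mem_map_iff, natSet_zero_ne_one.symm, Part.notMem_none]

lemma mk_mem_prod_δ_pairC {p q : Cantor} {x : X.X} {y : Y.X} (hx : x ∈ X.δ p)
    (hy : y ∈ Y.δ q) : ((x, y) : (X.prod Y).X) ∈ (X.prod Y).δ (pairC p q) :=
  (mem_prod_δ (xy := (x, y))).2 ⟨by rwa [leftC_pairC], by rwa [rightC_pairC]⟩

lemma inl_mem_sum_δ_inC {p : Cantor} {x : X.X} (hx : x ∈ X.δ p) :
    (Sum.inl x : (X.sum Y).X) ∈ (X.sum Y).δ (inC 0 p) := by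
  rw [inl_mem_sum_δ, inC, leftC_pairC, rightC_pairC]
  exact ⟨rfl, hx⟩

lemma some_mem_hat_δ_maEncode {p : Cantor} {x : X.X} (hx : x ∈ X.δ p) :
    some x ∈ X.hat.δ (maEncode p) := by
  refine Part.mem_some_iff.2 (Part.toOption_eq_some_iff.2 (Part.mem_bind_iff.2 ⟨p, ?_, hx⟩)).symm
  exact ⟨maEncode_total p, eVal_maEncode p⟩

end RepSp

namespace MFn

variable {f g : MFn}

lemma boxplus_inl_nonempty {x : f.A.X} :
    ((f.boxplus g).f (Sum.inl x)).Nonempty ↔ (f.f x).Nonempty := by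
  change ((some '' f.f x) ×ˢ (Set.univ : Set (Option g.B.X))).Nonempty ↔ _
  simp [Set.prod_nonempty_iff]

lemma boxplus_inr_nonempty {y : g.A.X} :
    ((f.boxplus g).f (Sum.inr y)).Nonempty ↔ (g.f y).Nonempty := by
  change ((Set.univ : Set (Option f.B.X)) ×ˢ (some '' g.f y)).Nonempty ↔ _
  simp [Set.prod_nonempty_iff]

lemma sqcap_nonempty {xy : f.A.X × g.A.X} :
    ((f.sqcap g).f xy).Nonempty ↔ (f.f xy.1).Nonempty ∧ (g.f xy.2).Nonempty := by
  change (if (f.f xy.1).Nonempty ∧ (g.f xy.2).Nonempty then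
      (Sum.inl '' f.f xy.1 ∪ Sum.inr '' g.f xy.2 : Set (f.B.X ⊕ g.B.X)) else ∅).Nonempty ↔ _
  split_ifs with h
  · exact iff_of_true ((h.1.image _).mono Set.subset_union_left) h
  · exact iff_of_false Set.not_nonempty_empty h

lemma inl_mem_sqcap {xy : f.A.X × g.A.X} {y : f.B.X} (hy : y ∈ f.f xy.1)
    (hg : (g.f xy.2).Nonempty) : (Sum.inl y : (f.sqcap g).B.X) ∈ (f.sqcap g).f xy := by
  change Sum.inl y ∈ (if (f.f xy.1).Nonempty ∧ (g.f xy.2).Nonempty then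
      (Sum.inl '' f.f xy.1 ∪ Sum.inr '' g.f xy.2 : Set (f.B.X ⊕ g.B.X)) else ∅)
  rw [if_pos ⟨⟨y, hy⟩, hg⟩]
  exact Or.inl ⟨y, hy, rfl⟩

lemma domName_boxplus {r : Cantor} :
    domName (f.boxplus g) r ↔
      (leftC r = natSet 0 ∧ domName f (rightC r)) ∨
        (leftC r = natSet 1 ∧ domName g (rightC r)) := by
  constructor
  · rintro ⟨x | y, hz, hne⟩
    · obtain ⟨h0, hx⟩ := RepSp.inl_mem_sum_δ.1 hz
      exact Or.inl ⟨h0, x, hx, boxplus_inl_nonempty.1 hne⟩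
    · obtain ⟨h1, hy⟩ := RepSp.inr_mem_sum_δ.1 hz
      exact Or.inr ⟨h1, y, hy, boxplus_inr_nonempty.1 hne⟩
  · rintro (⟨h0, x, hx, hne⟩ | ⟨h1, y, hy, hne⟩)
    · exact ⟨Sum.inl x, RepSp.inl_mem_sum_δ.2 ⟨h0, hx⟩, boxplus_inl_nonempty.2 hne⟩
    · exact ⟨Sum.inr y, RepSp.inr_mem_sum_δ.2 ⟨h1, hy⟩, boxplus_inr_nonempty.2 hne⟩

lemma domName_sqcap {r : Cantor} :
    domName (f.sqcap g) r ↔ domName f (leftC r) ∧ domName g (rightC r) := by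
  constructor
  · rintro ⟨xy, hxy, hne⟩
    obtain ⟨hx, hy⟩ := RepSp.mem_prod_δ.1 hxy
    obtain ⟨nx, ny⟩ := sqcap_nonempty.1 hne
    exact ⟨⟨_, hx, nx⟩, ⟨_, hy, ny⟩⟩
  · rintro ⟨⟨x, hx, nx⟩, ⟨y, hy, ny⟩⟩
    exact ⟨(x, y), RepSp.mem_prod_δ.2 ⟨hx, hy⟩, sqcap_nonempty.2 ⟨nx, ny⟩⟩

end MFn

section dFn

variable {A B S : Set Cantor} {p r : Cantor}

lemma mem_dFn_f {y : Cantor} : y ∈ (dFn S).f p ↔ p ∈ S ∧ y = zeroSeq := by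
  change y ∈ (if p ∈ S then {zeroSeq} else ∅ : Set Cantor) ↔ _
  split_ifs with h <;> simp [h]

lemma domName_dFn : domName (dFn S) p ↔ p ∈ S := by
  constructor
  · rintro ⟨x, hx, y, hy⟩
    rw [mem_CantorSp_δ.1 hx] at hy
    exact (mem_dFn_f.1 hy).1
  · intro hp
    exact ⟨p, mem_CantorSp_δ.2 rfl, zeroSeq, mem_dFn_f.2 ⟨hp, rfl⟩⟩

lemma solName_dFn (hp : p ∈ S) : solName (dFn S) p zeroSeq :=
  ⟨p, mem_CantorSp_δ.2 rfl, zeroSeq, mem_CantorSp_δ.2 rfl, mem_dFn_f.2 ⟨hp, rfl⟩⟩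

lemma domName_dFn_boxplus : domName ((dFn A).boxplus (dFn B)) r ↔ r ∈ setSum A B := by
  rw [MFn.domName_boxplus, domName_dFn, domName_dFn, mem_setSum]

lemma domName_dFn_sqcap : domName ((dFn A).sqcap (dFn B)) r ↔ r ∈ setProd A B := by
  rw [MFn.domName_sqcap, domName_dFn, domName_dFn, mem_setProd]

def zeroPairName : Cantor := pairC (maEncode zeroSeq) (maEncode zeroSeq)

lemma computable_zeroPairName : Computable zeroPairName :=
  have h := computable_maEncode (Computable.const false)
  computable_pairC h h

lemma solName_dFn_boxplus (hr : r ∈ setSum A B) :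
    solName ((dFn A).boxplus (dFn B)) r zeroPairName := by
  have hzero : some zeroSeq ∈ CantorSp.hat.δ (maEncode zeroSeq) :=
    RepSp.some_mem_hat_δ_maEncode (mem_CantorSp_δ.2 rfl)
  have hname := RepSp.mk_mem_prod_δ_pairC hzero hzero
  rcases mem_setSum.1 hr with ⟨h0, hA⟩ | ⟨h1, hB⟩
  · refine ⟨Sum.inl (rightC r), RepSp.inl_mem_sum_δ.2 ⟨h0, mem_CantorSp_δ.2 rfl⟩, _, hname, ?_⟩
    exact Set.mk_mem_prod ⟨zeroSeq, mem_dFn_f.2 ⟨hA, rfl⟩, rfl⟩ trivial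
  · refine ⟨Sum.inr (rightC r), RepSp.inr_mem_sum_δ.2 ⟨h1, mem_CantorSp_δ.2 rfl⟩, _, hname, ?_⟩
    exact Set.mk_mem_prod trivial ⟨zeroSeq, mem_dFn_f.2 ⟨hB, rfl⟩, rfl⟩

lemma solName_dFn_sqcap (hr : r ∈ setProd A B) :
    solName ((dFn A).sqcap (dFn B)) r (inC 0 zeroSeq) := by
  obtain ⟨hA, hB⟩ := mem_setProd.1 hr
  refine ⟨(leftC r, rightC r), RepSp.mem_prod_δ.2 ⟨mem_CantorSp_δ.2 rfl, mem_CantorSp_δ.2 rfl⟩,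
    Sum.inl zeroSeq, ?_, ?_⟩
  · exact RepSp.inl_mem_sum_δ_inC (mem_CantorSp_δ.2 rfl)
  · exact MFn.inl_mem_sqcap (mem_dFn_f.2 ⟨hA, rfl⟩) ⟨zeroSeq, mem_dFn_f.2 ⟨hB, rfl⟩⟩

end dFn

lemma initSeg_getElem? (p : Cantor) {s n : ℕ} (h : n < s) :
    (initSeg p s)[n]? = some (p n) := by
  simp [initSeg, h]

namespace TuringFunctional

lemma eval_eq_some {Φ : TuringFunctional} {p q : Cantor}
    (hdom : ∀ n, ∃ s b, Φ.approx (initSeg p s) n = some b)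
    (hval : ∀ n s b, Φ.approx (initSeg p s) n = some b → b = q n) :
    Φ.eval p = Part.some q :=
  Part.eq_some_iff.2 ⟨hdom, funext fun n => hval n _ _ (hdom n).choose_spec.choose_spec⟩

def identity : TuringFunctional where
  approx σ n := σ[n]?
  computable := Primrec.list_getElem?.to_comp
  mono := by
    rintro σ τ n b ⟨t, rfl⟩ h
    rwa [List.getElem?_append_left (List.getElem?_eq_some_iff.1 h).1]

lemma identity_eval (p : Cantor) : identity.eval p = Part.some p := by
  refine eval_eq_some (fun n => ⟨n + 1, p n, initSeg_getElem? p n.lt_succ_self⟩) ?_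
  intro n s b h
  have hlt : n < s := by simpa [initSeg] using (List.getElem?_eq_some_iff.1 h).1
  exact Option.some.inj (h.symm.trans (initSeg_getElem? p hlt))

def const (c : Cantor) (hc : Computable c) : TuringFunctional where
  approx _ n := some (c n)
  computable := Computable.option_some.comp (hc.comp Computable.snd)
  mono _ _ _ _ _ h := h

lemma const_eval {c : Cantor} (hc : Computable c) (p : Cantor) :
    (const c hc).eval p = Part.some c :=
  eval_eq_some (fun n => ⟨0, c n, rfl⟩) fun _ _ _ h => (Option.some.inj h).symm

end TuringFunctional

section Realizers

variable {f g : MFn} {p : Cantor}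

lemma Realizes.exists_solName {G : Cantor →. Cantor} (hG : Realizes G g) (hp : domName g p) :
    ∃ q ∈ G p, solName g p q := by
  obtain ⟨x, hx, hne⟩ := hp
  obtain ⟨q, hq, y, hy, hyx⟩ := hG p x hx hne
  exact ⟨q, hq, x, hx, y, hy, hyx⟩

lemma exists_solName (hp : domName g p) : ∃ q, solName g p q := by
  obtain ⟨x, hx, y, hy⟩ := hp
  obtain ⟨q, hq⟩ := g.B.surj y
  exact ⟨q, x, hx, y, hq, hy⟩

def exactRealizer (g : MFn) : Cantor →. Cantor :=
  fun p => ⟨domName g p, fun hp => (exists_solName hp).choose⟩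

lemma realizes_exactRealizer (g : MFn) : Realizes (exactRealizer g) g := by
  intro p x hx hne
  have hp : domName g p := ⟨x, hx, hne⟩
  obtain ⟨x', hx', y, hy, hyx⟩ := (exists_solName hp).choose_spec
  exact ⟨_, ⟨hp, rfl⟩, y, hy, by rwa [Part.mem_unique hx hx']⟩

lemma mem_pcomp {F G : Cantor →. Cantor} {z : Cantor} :
    z ∈ pcomp F G p ↔ ∃ y ∈ G p, z ∈ F y :=
  Part.mem_bind_iff

lemma sWLe_of_const (Φ : TuringFunctional) {c : Cantor} (hc : Computable c)
    (h : ∀ p, domName f p → (∃ p' ∈ Φ.eval p, domName g p') ∧ solName f p c) :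
    sWLe f g := by
  refine ⟨Φ, .const c hc, fun G hG p x hx hne => ?_⟩
  obtain ⟨⟨p', hp', hdom⟩, x₀, hx₀, y, hy, hyx⟩ := h p ⟨x, hx, hne⟩
  obtain ⟨q, hq, -⟩ := hG.exists_solName hdom
  refine ⟨c, mem_pcomp.2 ⟨q, mem_pcomp.2 ⟨p', hp', hq⟩, ?_⟩, y, hy, ?_⟩
  · rw [TuringFunctional.const_eval]
    exact Part.mem_some c
  · rwa [Part.mem_unique hx hx₀]

end Realizers

section dFnReductions

variable {S : Set Cantor} {g : MFn}

lemma sWLe_dFn_iff :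
    sWLe (dFn S) g ↔ ∃ Φ : TuringFunctional, ∀ p ∈ S, ∃ p' ∈ Φ.eval p, domName g p' := by
  constructor
  · rintro ⟨Φ, Ψ, h⟩
    refine ⟨Φ, fun p hp => ?_⟩
    obtain ⟨q, hq, -⟩ := (h _ (realizes_exactRealizer g)).exists_solName (domName_dFn.2 hp)
    obtain ⟨z, hz, -⟩ := mem_pcomp.1 hq
    obtain ⟨p', hp', hz'⟩ := mem_pcomp.1 hz
    exact ⟨p', hp', hz'.fst⟩
  · rintro ⟨Φ, hΦ⟩
    exact sWLe_of_const Φ (Computable.const false) fun p hp =>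
      ⟨hΦ p (domName_dFn.1 hp), solName_dFn (domName_dFn.1 hp)⟩

lemma sWLe_dFn_of_forall_domName (h : ∀ p ∈ S, domName g p) : sWLe (dFn S) g :=
  sWLe_dFn_iff.2 ⟨.identity, fun p hp =>
    ⟨p, (TuringFunctional.identity_eval p).symm ▸ Part.mem_some p, h p hp⟩⟩

lemma sWLe_dFn_of_solName {c : Cantor} (hc : Computable c)
    (h : ∀ p, domName g p → p ∈ S ∧ solName g p c) : sWLe g (dFn S) :=
  sWLe_of_const .identity hc fun p hp =>
    ⟨⟨p, (TuringFunctional.identity_eval p).symm ▸ Part.mem_some p, domName_dFn.2 (h p hp).1⟩,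
      (h p hp).2⟩

end dFnReductions

/-- Proposition 4.9: `A ↦ d_A` is a reverse lattice embedding of the
Medvedev lattice into the strong Weihrauch lattice. -/
theorem stmt16 : ∀ A B : Set Cantor,
    (sWLe (dFn B) (dFn A) ↔ MedvedevLe A B) ∧
    sWEq (dFn (setSum A B)) ((dFn A).boxplus (dFn B)) ∧
    sWEq (dFn (setProd A B)) ((dFn A).sqcap (dFn B)) := by
  intro A B
  refine ⟨?_, ⟨?_, ?_⟩, ⟨?_, ?_⟩⟩
  · simp only [sWLe_dFn_iff, domName_dFn]
    rfl
  · exact sWLe_dFn_of_forall_domName fun _ => domName_dFn_boxplus.2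
  · exact sWLe_dFn_of_solName computable_zeroPairName fun _ hp =>
      ⟨domName_dFn_boxplus.1 hp, solName_dFn_boxplus (domName_dFn_boxplus.1 hp)⟩
  · exact sWLe_dFn_of_forall_domName fun _ => domName_dFn_sqcap.2
  · exact sWLe_dFn_of_solName (computable_pairC (computable_natSet 0) (Computable.const false))
      fun _ hp => ⟨domName_dFn_sqcap.1 hp, solName_dFn_sqcap (domName_dFn_sqcap.1 hp)⟩

end

end StrongWeihrauch
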